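/- arXiv:1309.3801 — 7 statements merged into one kernel-verified Lean document; each statement's English description precedes it below -/
import Mathlib

section
/- Let R be a commutative ring, m ≥ 1, and C an m×m matrix over R with adjugate A. Fix an integer j with 0 ≤ j < m, indices 1 ≤ k₁ < k₂ < … < k_j ≤ m, and an integer s with 1 ≤ s ≤ j+1. Then ∑_{a=1}^{m} C(1,…,j+1 | k₁,…,k_j,a) · A_{a,s} = (−1)^{s+j+1} · C(1,…,ŝ,…,j+1 | k₁,…,k_j) · det(C), where ŝ indicates that the row index s is omitted from the list 1,…,j+1. -/
/-! Expanding `C(1,…,j+1 | k₁,…,k_j,a)` along its last column turns the sum over `a` into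
`∑ᵤ ± C(…û… | k) · (C · adj C)_{u,s}`, and `C · adj C = det C · I` leaves only the term `u = s`. -/

open Matrix

namespace Matrix

variable {R ι κ : Type*} [CommRing R] {n : ℕ}

theorem det_of_snoc_column (C : Matrix ι κ R) (r : Fin (n + 1) → ι) (k : Fin n → κ) (a : κ) :
    (of fun u v => C (r u) ((Fin.snoc k a : Fin (n + 1) → κ) v)).det
      = ∑ u : Fin (n + 1), (-1 : R) ^ ((u : ℕ) + n) * C (r u) a *
          (of fun u' v => C (r (u.succAbove u')) (k v)).det := by
  rw [det_succ_column _ (Fin.last n)]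
  refine Finset.sum_congr rfl fun u _ => ?_
  congr 2
  · simp [Fin.snoc_last]
  · ext u' v
    simp [Fin.succAbove_last, Fin.snoc_castSucc]

theorem sum_det_of_snoc_column_mul [Fintype κ] (C : Matrix ι κ R) (r : Fin (n + 1) → ι)
    (k : Fin n → κ) (x : κ → R) :
    ∑ a, (of fun u v => C (r u) ((Fin.snoc k a : Fin (n + 1) → κ) v)).det * x a
      = ∑ u : Fin (n + 1), (-1 : R) ^ ((u : ℕ) + n) * (C *ᵥ x) (r u) *
          (of fun u' v => C (r (u.succAbove u')) (k v)).det := by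
  simp_rw [det_of_snoc_column, Finset.sum_mul]
  rw [Finset.sum_comm]
  refine Finset.sum_congr rfl fun u _ => ?_
  simp_rw [mulVec, dotProduct, Finset.mul_sum, Finset.sum_mul]
  exact Finset.sum_congr rfl fun a _ => by ring

end Matrix

theorem stmt0_general {R : Type*} [CommRing R] {m j : ℕ} (hj : j + 1 ≤ m)
    (C : Matrix (Fin m) (Fin m) R) (k : Fin j → Fin m)
    (s : Fin (j + 1)) :
    ∑ a : Fin m,
        (Matrix.of fun u v : Fin (j + 1) => C (Fin.castLE hj u) ((Fin.snoc k a : Fin (j+1) → Fin m) v)).det *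
          C.adjugate a (Fin.castLE hj s)
      = (-1 : R) ^ ((s : ℕ) + j) *
          (Matrix.of fun u v : Fin j => C (Fin.castLE hj (s.succAbove u)) (k v)).det *
          C.det := by
  have hcol (u : Fin (j + 1)) :
      (C *ᵥ fun a => C.adjugate a (Fin.castLE hj s)) (Fin.castLE hj u)
        = if u = s then C.det else 0 := by
    change (C * C.adjugate) (Fin.castLE hj u) (Fin.castLE hj s) = _
    simp [mul_adjugate, one_apply, Fin.castLE_inj]
  rw [sum_det_of_snoc_column_mul]
  simp_rw [hcol, mul_ite, ite_mul, mul_zero, zero_mul, Finset.sum_ite_eq']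
  simp only [Finset.mem_univ, if_true]
  ring

/-- Let `R` be a commutative ring, `m ≥ 1`, and `C` an `m×m` matrix over `R`
with adjugate `A`.  Fix `0 ≤ j < m`, strictly increasing indices `k₁ < … < k_j` in `{1,…,m}`,
and `s` with `1 ≤ s ≤ j+1` (encoded as `s : Fin (j+1)`).  Then
`∑_{a=1}^{m} C(1,…,j+1 | k₁,…,k_j,a) · A_{a,s}
  = (−1)^{s+j+1} · C(1,…,ŝ,…,j+1 | k₁,…,k_j) · det C`.
(The sign `(−1)^{s+j+1}` with 1-based `s` equals `(−1)^{s₀+j}` for the 0-based `s₀ = s - 1`.) -/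
theorem stmt0 {R : Type*} [CommRing R] {m j : ℕ} (hm : 1 ≤ m) (hj : j + 1 ≤ m)
    (C : Matrix (Fin m) (Fin m) R) (k : Fin j → Fin m) (hk : StrictMono k)
    (s : Fin (j + 1)) :
    ∑ a : Fin m,
        (Matrix.of fun u v : Fin (j + 1) => C (Fin.castLE hj u) ((Fin.snoc k a : Fin (j+1) → Fin m) v)).det *
          C.adjugate a (Fin.castLE hj s)
      = (-1 : R) ^ ((s : ℕ) + j) *
          (Matrix.of fun u v : Fin j => C (Fin.castLE hj (s.succAbove u)) (k v)).det *
          C.det :=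
  stmt0_general hj C k s
end

section
/- Let R be a commutative ring, m ≥ 1, and C an m×m matrix over R with adjugate A. Fix an integer j with 0 ≤ j < m, indices 1 ≤ k₁ < k₂ < … < k_j ≤ m, and an integer s with j+1 < s ≤ m. Then ∑_{a=1}^{m} C(1,…,j+1 | k₁,…,k_j,a) · A_{a,s} = 0. -/
/-! A minor `C(r | k₁,…,k_j,a)` is linear in its last column `C(r, a)`, so summing it against
`A_{a,s}` replaces that column by `(C·A)(r, s) = det C · δ_{r,s}`, which is zero because none of
the rows `1,…,j+1` is `s`. -/

namespace Matrix

variable {R ι κ ν : Type*} [CommRing R] [Fintype κ]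

theorem sum_det_submatrix_snoc_mul_eq_zero {n : ℕ} (C : Matrix ι κ R) (B : Matrix κ ν R)
    (r : Fin (n + 1) → ι) (k : Fin n → κ) (s : ν) (h : ∀ u, (C * B) (r u) s = 0) :
    ∑ a, (C.submatrix r (Fin.snoc k a)).det * B a s = 0 := by
  have minor : ∀ a (u : Fin (n + 1)), (C.submatrix r (Fin.snoc k a)).submatrix u.succAbove
      (Fin.last n).succAbove = C.submatrix (r ∘ u.succAbove) k := by
    intro a u
    ext p q
    simp [Fin.succAbove_last]
  calc ∑ a, (C.submatrix r (Fin.snoc k a)).det * B a s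
      = ∑ u : Fin (n + 1),
          (-1) ^ ((u : ℕ) + n) * (C.submatrix (r ∘ u.succAbove) k).det * (C * B) (r u) s := by
        simp_rw [det_succ_column _ (Fin.last n), minor, Finset.sum_mul]
        rw [Finset.sum_comm]
        refine Finset.sum_congr rfl fun u _ => ?_
        simp only [mul_apply, Finset.mul_sum, submatrix_apply, Fin.snoc_last, Fin.val_last]
        exact Finset.sum_congr rfl fun a _ => by ring
    _ = 0 := by simp [h]

end Matrix

theorem stmt1_general {R : Type*} [CommRing R] {m j : ℕ} (hj : j + 1 ≤ m)
    (C : Matrix (Fin m) (Fin m) R) (k : Fin j → Fin m)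
    (s : Fin m) (hs : j < (s : ℕ)) :
    ∑ a : Fin m,
        (Matrix.of fun u v : Fin (j + 1) =>
            C (Fin.castLE hj u) ((Fin.snoc k a : Fin (j+1) → Fin m) v)).det *
          C.adjugate a s
      = 0 := by
  refine Matrix.sum_det_submatrix_snoc_mul_eq_zero C C.adjugate (Fin.castLE hj) k s fun u => ?_
  have hrow : Fin.castLE hj u ≠ s := Fin.ne_of_val_ne (by rw [Fin.val_castLE]; omega)
  rw [Matrix.mul_adjugate, Matrix.smul_apply, Matrix.one_apply_ne hrow, smul_zero]

/-- Let `R` be a commutative ring, `m ≥ 1`, and `C` an `m×m` matrix over `R`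
with adjugate `A`.  Fix `0 ≤ j < m`, strictly increasing indices `k₁ < … < k_j` in `{1,…,m}`,
and `s` with `j+1 < s ≤ m` (encoded as `s : Fin m` with `j < s` for the 0-based value).  Then
`∑_{a=1}^{m} C(1,…,j+1 | k₁,…,k_j,a) · A_{a,s} = 0`. -/
theorem stmt1 {R : Type*} [CommRing R] {m j : ℕ} (hm : 1 ≤ m) (hj : j + 1 ≤ m)
    (C : Matrix (Fin m) (Fin m) R) (k : Fin j → Fin m) (hk : StrictMono k)
    (s : Fin m) (hs : j < (s : ℕ)) :
    ∑ a : Fin m,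
        (Matrix.of fun u v : Fin (j + 1) =>
            C (Fin.castLE hj u) ((Fin.snoc k a : Fin (j+1) → Fin m) v)).det *
          C.adjugate a s
      = 0 :=
  stmt1_general hj C k s hs
end

section
/- Let R be a commutative ring, m ≥ 1, C an m×m matrix over R with adjugate A, and v ∈ R^m. Fix an integer j with 0 ≤ j < m and indices 1 ≤ k₁ < k₂ < … < k_j ≤ m. Let B be the (j+1)×(j+1) matrix whose (u,t) entry for 1 ≤ t ≤ j is C_{u,k_t} and whose last column has entries v_u (u = 1,…,j+1); for each a ∈ {1,…,m} let B_a be the matrix obtained from B by replacing its last column with the entries C_{u,a} (u = 1,…,j+1). Then det(C) · det(B) = ∑_{a=1}^{m} det(B_a) · (A·v)_a, where A·v is the matrix-vector product of the adjugate of C with the column vector v. -/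
/-!
Write `B(w)` for `B` with last column `w`. The map `w ↦ det B(w)` is linear, so the right-hand side
is `det B(w)` for `w = ∑ₐ (A v)ₐ • Cₐ` (columns cut to the first `j + 1` rows). But
`∑ₐ (A v)ₐ • Cₐ = C A v = det C • v`, and `det B(det C • v) = det C · det B`.
-/

open Matrix

theorem Matrix.det_updateCol_sum_smul {R ι n : Type*} [CommRing R] [Fintype n] [DecidableEq n]
    [Fintype ι] (M : Matrix n n R) (j : n) (x : ι → R) (w : ι → n → R) :
    (M.updateCol j (∑ a, x a • w a)).det = ∑ a, x a * (M.updateCol j (w a)).det := by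
  let f : (n → R) →ₗ[R] R := (detRowAlternating : (n → R) [⋀^n]→ₗ[R] R).toLinearMap Mᵀ j
  have hf (y : n → R) : (M.updateCol j y).det = f y := by
    rw [← det_transpose, ← updateRow_transpose]; rfl
  simp only [hf, map_sum, map_smul, smul_eq_mul]

theorem Matrix.updateCol_last_of_snoc {α : Type*} {n : ℕ} (M : Fin (n + 1) → Fin n → α)
    (w w' : Fin (n + 1) → α) :
    (of fun u t => (Fin.snoc (M u) (w' u) : Fin (n + 1) → α) t).updateCol (Fin.last n) w =
      of fun u t => (Fin.snoc (M u) (w u) : Fin (n + 1) → α) t := by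
  ext u t
  refine Fin.lastCases ?_ (fun t => ?_) t <;> simp

theorem Matrix.sum_adjugate_mulVec_smul_transpose {R m : Type*} [CommRing R] [Fintype m]
    [DecidableEq m] (C : Matrix m m R) (v : m → R) :
    ∑ a, (C.adjugate *ᵥ v) a • Cᵀ a = C.det • v :=
  calc ∑ a, (C.adjugate *ᵥ v) a • Cᵀ a = C *ᵥ (C.adjugate *ᵥ v) := by
        simp only [mulVec_eq_sum _ C, op_smul_eq_smul]
    _ = C.det • v := by rw [mulVec_mulVec, mul_adjugate, smul_mulVec, one_mulVec]

theorem stmt3_general {R : Type*} [CommRing R] {m j : ℕ} (hj : j + 1 ≤ m)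
    (C : Matrix (Fin m) (Fin m) R) (v : Fin m → R)
    (k : Fin j → Fin m) :
    C.det *
        (Matrix.of fun u t : Fin (j + 1) =>
          (Fin.snoc (fun t' : Fin j => C (Fin.castLE hj u) (k t'))
            (v (Fin.castLE hj u)) : Fin (j+1) → R) t).det
      = ∑ a : Fin m,
          (Matrix.of fun u t : Fin (j + 1) =>
              (Fin.snoc (fun t' : Fin j => C (Fin.castLE hj u) (k t'))
                (C (Fin.castLE hj u) a) : Fin (j+1) → R) t).det *
            (C.adjugate.mulVec v) a := by
  set B := Matrix.of fun u t : Fin (j + 1) =>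
    (Fin.snoc (fun t' : Fin j => C (Fin.castLE hj u) (k t'))
      (v (Fin.castLE hj u)) : Fin (j + 1) → R) t
  have hcol : ∑ a, (C.adjugate *ᵥ v) a • (fun u => C (Fin.castLE hj u) a) =
      C.det • fun u => v (Fin.castLE hj u) := by
    ext u
    simpa using congrFun (C.sum_adjugate_mulVec_smul_transpose v) (Fin.castLE hj u)
  calc C.det * B.det
      = (B.updateCol (Fin.last j) (C.det • fun u => v (Fin.castLE hj u))).det := by
        rw [det_updateCol_smul, updateCol_last_of_snoc]
    _ = ∑ a, (C.adjugate *ᵥ v) a *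
          (B.updateCol (Fin.last j) fun u => C (Fin.castLE hj u) a).det := by
        rw [← hcol, det_updateCol_sum_smul]
    _ = _ := by simp only [B, updateCol_last_of_snoc, mul_comm]

/-- (Denominator-free form of Statement 2, over any commutative ring.)
Let `R` be a commutative ring, `m ≥ 1`, `C` an `m×m` matrix over `R` with adjugate `A`,
and `v ∈ R^m`.  Fix `0 ≤ j < m` and strictly increasing indices `k₁ < … < k_j`.
With `B` and `B_a` as in Statement 2, one has
`det C · det B = ∑_{a=1}^m det(B_a) · (A·v)_a`. -/
theorem stmt3 {R : Type*} [CommRing R] {m j : ℕ} (hm : 1 ≤ m) (hj : j + 1 ≤ m)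
    (C : Matrix (Fin m) (Fin m) R) (v : Fin m → R)
    (k : Fin j → Fin m) (hk : StrictMono k) :
    C.det *
        (Matrix.of fun u t : Fin (j + 1) =>
          (Fin.snoc (fun t' : Fin j => C (Fin.castLE hj u) (k t'))
            (v (Fin.castLE hj u)) : Fin (j+1) → R) t).det
      = ∑ a : Fin m,
          (Matrix.of fun u t : Fin (j + 1) =>
              (Fin.snoc (fun t' : Fin j => C (Fin.castLE hj u) (k t'))
                (C (Fin.castLE hj u) a) : Fin (j+1) → R) t).det *
            (C.adjugate.mulVec v) a :=
  stmt3_general hj C v k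
end

section
/- Let R be a commutative ring, m ≥ 2, and C an m×m matrix over R with adjugate A. For indices 1 ≤ i < k ≤ m and 1 ≤ a < b ≤ m, one has A_{i,a}·A_{k,b} − A_{k,a}·A_{i,b} = (−1)^{i+k+a+b} · det(C) · det(C′), where C′ is the (m−2)×(m−2) matrix obtained from C by deleting its a-th and b-th rows and its i-th and k-th columns (for m = 2 one sets det(C′) = 1). -/
/-!
Let `E` be the identity matrix with its columns `i`, `k` replaced by the columns `a`, `b` of
`adj C`. Then `det E` is the `2 × 2` minor of `adj C` on the left, while `C * E` is `C` with its
columns `i`, `k` replaced by `det C • e_a` and `det C • e_b`; expanding along these two columns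
gives `det (C * E) = ± (det C)² det C'`. So the identity holds after multiplication by `det C`.
For the generic matrix over `ℤ[X_ij]` the determinant is not a zero divisor and may be
cancelled, and specializing the variables gives the identity for every `C`.
-/

/-- The strictly increasing embedding `Fin t → Fin (t+2)` whose range is the complement of
`{a, b}`, for `a < b` in `Fin (t+2)`: it is the composite of the two successor-above maps. -/
def delTwoEmb {t : ℕ} (a b : Fin (t + 2)) (h : a < b) : Fin t → Fin (t + 2) :=
  fun u =>
    b.succAbove
      ((⟨(a : ℕ), Nat.lt_of_lt_of_le (Fin.lt_def.mp h) (Nat.lt_succ_iff.mp b.isLt)⟩ :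
          Fin (t + 1)).succAbove u)

open Matrix

section delTwoEmb

variable {t : ℕ} {a b : Fin (t + 2)}

theorem delTwoEmb_ne_right (hab : a < b) (u : Fin t) : delTwoEmb a b hab u ≠ b :=
  Fin.succAbove_ne _ _

theorem delTwoEmb_ne_left (hab : a < b) (u : Fin t) : delTwoEmb a b hab u ≠ a := fun h =>
  Fin.succAbove_ne _ u
    (Fin.succAbove_right_injective (h.trans (Fin.succAbove_castPred_of_lt b a hab).symm))

end delTwoEmb

namespace Matrix

variable {R : Type*} [CommRing R]

theorem det_updateCol_updateCol_one {n : Type*} [Fintype n] [DecidableEq n] {i k : n}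
    (hik : i ≠ k) (u v : n → R) :
    det (((1 : Matrix n n R).updateCol i u).updateCol k v) = u i * v k - u k * v i := by
  let U : Matrix n (Fin 2) R := (of ![u - Pi.single i 1, v - Pi.single k 1])ᵀ
  let V : Matrix (Fin 2) n R := of ![Pi.single i 1, Pi.single k 1]
  have hE : ((1 : Matrix n n R).updateCol i u).updateCol k v = 1 + U * V := by
    ext r c
    rcases eq_or_ne c k with rfl | hck
    · simp [U, V, Matrix.mul_apply, hik, one_apply, Pi.single_apply]
    rcases eq_or_ne c i with rfl | hci
    · simp [U, V, Matrix.mul_apply, hik, one_apply, Pi.single_apply]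
    · simp [U, V, Matrix.mul_apply, hck, hci, Pi.single_apply, eq_comm]
  have hVU : 1 + V * U = !![u i, v i; u k, v k] := by
    ext x y
    fin_cases x <;> fin_cases y <;> simp [U, V, hik, hik.symm]
  rw [hE, det_one_add_mul_comm, hVU, det_fin_two_of]
  ring

theorem mulVec_adjugate_col {n : Type*} [Fintype n] [DecidableEq n] (A : Matrix n n R) (j : n) :
    A *ᵥ A.adjugate.col j = A.det • Pi.single j 1 := by
  rw [← mulVec_single_one, ← cramer_eq_adjugate_mulVec, mulVec_cramer]

theorem det_eq_of_col_eq_single {n : ℕ} (M : Matrix (Fin (n + 1)) (Fin (n + 1)) R)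
    {r j : Fin (n + 1)} (hM : ∀ r' ≠ r, M r' j = 0) :
    det M = (-1) ^ (r + j : ℕ) * M r j * det (M.submatrix r.succAbove j.succAbove) := by
  rw [det_succ_column M j, Finset.sum_eq_single r (fun r' _ h => by simp [hM r' h]) (by simp)]

variable {t : ℕ}

theorem det_eq_of_cols_eq_single (M : Matrix (Fin (t + 2)) (Fin (t + 2)) R)
    {i k a b : Fin (t + 2)} (hik : i < k) (hab : a < b)
    (hk : ∀ r ≠ b, M r k = 0) (hi : ∀ r ≠ a, M r i = 0) :
    det M = (-1) ^ ((i : ℕ) + k + a + b) * M b k * M a i *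
      det (of fun u v : Fin t => M (delTwoEmb a b hab u) (delTwoEmb i k hik v)) := by
  set a' := a.castPred (hab.trans_le b.le_last).ne
  set i' := i.castPred (hik.trans_le k.le_last).ne
  have ha' : b.succAbove a' = a := Fin.succAbove_castPred_of_lt b a hab
  have hi' : k.succAbove i' = i := Fin.succAbove_castPred_of_lt k i hik
  rw [det_eq_of_col_eq_single M hk, det_eq_of_col_eq_single (r := a') (j := i')]
  · have hC' : M.submatrix (b.succAbove ∘ a'.succAbove) (k.succAbove ∘ i'.succAbove) =
        of fun u v => M (delTwoEmb a b hab u) (delTwoEmb i k hik v) := rfl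
    rw [submatrix_submatrix, hC', submatrix_apply, ha', hi', Fin.coe_castPred, Fin.coe_castPred]
    ring
  · intro r hr
    rw [submatrix_apply, hi']
    exact hi _ (ha' ▸ Fin.succAbove_right_injective.ne hr)

theorem det_mul_adjugate_minor_two (C : Matrix (Fin (t + 2)) (Fin (t + 2)) R)
    {i k a b : Fin (t + 2)} (hik : i < k) (hab : a < b) :
    C.det * (C.adjugate i a * C.adjugate k b - C.adjugate k a * C.adjugate i b) =
      C.det * ((-1) ^ ((i : ℕ) + k + a + b) * C.det *
        det (of fun u v : Fin t => C (delTwoEmb a b hab u) (delTwoEmb i k hik v))) := by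
  set E := ((1 : Matrix _ _ R).updateCol i (C.adjugate.col a)).updateCol k (C.adjugate.col b)
  set F := (C.updateCol i (C.det • Pi.single a 1)).updateCol k (C.det • Pi.single b 1)
  have hCE : C * E = F := by
    rw [mul_updateCol, mul_updateCol, mul_one, mulVec_adjugate_col, mulVec_adjugate_col]
  have hF : ∀ u v, F (delTwoEmb a b hab u) (delTwoEmb i k hik v) =
      C (delTwoEmb a b hab u) (delTwoEmb i k hik v) := fun u v => by
    simp [F, delTwoEmb_ne_right hik v, delTwoEmb_ne_left hik v]
  have hdetF := det_eq_of_cols_eq_single F hik hab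
    (fun r hr => by simp [F, hr]) (fun r hr => by simp [F, hr, hik.ne])
  calc C.det * (C.adjugate i a * C.adjugate k b - C.adjugate k a * C.adjugate i b)
      = C.det * E.det := by rw [det_updateCol_updateCol_one hik.ne]; rfl
    _ = F.det := by rw [← det_mul, hCE]
    _ = _ := by
      rw [hdetF]
      simp only [hF, F, updateCol_self, updateCol_ne hik.ne, Pi.smul_apply, Pi.single_eq_same]
      ring

end Matrix

/-- Jacobi's theorem on 2×2 minors of the adjugate.
Let `R` be a commutative ring, `m = t + 2 ≥ 2`, and `C` an `m×m` matrix over `R` with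
adjugate `A`.  For indices `i < k` and `a < b` one has
`A_{i,a}·A_{k,b} − A_{k,a}·A_{i,b} = (−1)^{i+k+a+b} · det(C) · det(C′)`,
where `C′` is obtained from `C` by deleting rows `a, b` and columns `i, k`.
(The sign with 1-based indices equals the sign with 0-based indices.) -/
theorem stmt5 {R : Type*} [CommRing R] {t : ℕ}
    (C : Matrix (Fin (t + 2)) (Fin (t + 2)) R)
    (i k a b : Fin (t + 2)) (hik : i < k) (hab : a < b) :
    C.adjugate i a * C.adjugate k b - C.adjugate k a * C.adjugate i b
      = (-1 : R) ^ ((i : ℕ) + (k : ℕ) + (a : ℕ) + (b : ℕ)) * C.det *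
          (Matrix.of fun u v : Fin t =>
            C (delTwoEmb a b hab u) (delTwoEmb i k hik v)).det := by
  let X := mvPolynomialX (Fin (t + 2)) (Fin (t + 2)) ℤ
  have hX := mul_left_cancel₀ (det_mvPolynomialX_ne_zero _ ℤ)
    (det_mul_adjugate_minor_two X hik hab)
  let φ := MvPolynomial.aeval (R := ℤ) fun p : Fin (t + 2) × Fin (t + 2) => C p.1 p.2
  have hφX : φ.mapMatrix X = C := mvPolynomialX_mapMatrix_aeval ℤ C
  have hminor : (of fun u v : Fin t => C (delTwoEmb a b hab u) (delTwoEmb i k hik v)) =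
      φ.mapMatrix (of fun u v => X (delTwoEmb a b hab u) (delTwoEmb i k hik v)) := by
    rw [← hφX]; rfl
  rw [hminor, ← hφX, ← AlgHom.map_adjugate, ← AlgHom.map_det, ← AlgHom.map_det]
  simpa using congrArg φ hX
end

section
/- Let p be a prime with p > 2, m ≥ 1, λ : {1,…,m} → ℤ a function, and i, k ∈ {1,…,m}. Let μ = λ − δ_i and ν = λ − δ_k, i.e., μ_t = λ_t − 1 if t = i and μ_t = λ_t otherwise, and similarly for ν with k in place of i. Suppose there exists a permutation σ of {1,…,m} such that μ_t − t ≡ ν_{σ(t)} − σ(t) (mod p) for every t ∈ {1,…,m}. Then λ_i − i ≡ λ_k − k (mod p). -/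
/-!
Put `x t = λ_t - t` in `ZMod p`. The hypothesis says that the value lists of `x - δ_i` and
`x - δ_k` are permutations of each other, i.e. the multisets `{x_i - 1, x_k} + R` and
`{x_i, x_k - 1} + R` coincide, where `R` collects the values at the other positions. Cancelling `R`,
`x_i` lies in `{x_i - 1, x_k}`, and `x_i = x_i - 1` forces `p = 1`, where every congruence holds.
-/

open Function

theorem Multiset.map_univ_update_add {α β : Type*} [Fintype α] [DecidableEq α] (f : α → β)
    (i : α) (b : β) :
    Finset.univ.val.map (update f i b) + {f i} = Finset.univ.val.map f + {b} := by
  have hrest : (Finset.univ.val.erase i).map (update f i b) = (Finset.univ.val.erase i).map f :=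
    Multiset.map_congr rfl fun t ht =>
      update_of_ne ((Finset.univ.nodup.mem_erase_iff).1 ht).1 _ _
  rw [← Multiset.cons_erase (Finset.mem_univ i), Multiset.map_cons, Multiset.map_cons,
    update_self, hrest, ← Multiset.singleton_add, ← Multiset.singleton_add]
  abel

theorem eq_or_eq_zero_of_update_sub_eq_comp_perm {α G : Type*} [Fintype α] [DecidableEq α]
    [AddGroup G] (x : α → G) (a : G) {i k : α} (σ : Equiv.Perm α)
    (h : update x i (x i - a) = update x k (x k - a) ∘ σ) : x i = x k ∨ a = 0 := by
  have hmap : Finset.univ.val.map (update x i (x i - a))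
      = Finset.univ.val.map (update x k (x k - a)) := by
    rw [h, ← Multiset.map_map, Multiset.map_univ_val_equiv]
  have hi := Multiset.map_univ_update_add x i (x i - a)
  have hk := Multiset.map_univ_update_add x k (x k - a)
  have hpair : ({x i - a, x k} : Multiset G) = {x k - a, x i} := by
    apply add_left_cancel (a := Finset.univ.val.map x)
    simp only [Multiset.insert_eq_cons, ← Multiset.singleton_add, ← add_assoc, ← hi, ← hk, hmap]
    abel
  have hmem : x i ∈ ({x i - a, x k} : Multiset G) := by
    rw [hpair]
    simp
  simpa [eq_comm (a := x i), sub_eq_self, or_comm] using hmem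

theorem stmt7_general {p : ℕ} {m : ℕ}
    (lam : Fin m → ℤ) (i k : Fin m) (σ : Equiv.Perm (Fin m))
    (hσ : ∀ t : Fin m,
      Int.ModEq (p : ℤ)
        ((if t = i then lam t - 1 else lam t) - (((t : ℕ) : ℤ) + 1))
        ((if σ t = k then lam (σ t) - 1 else lam (σ t)) - (((σ t : ℕ) : ℤ) + 1))) :
    Int.ModEq (p : ℤ) (lam i - (((i : ℕ) : ℤ) + 1)) (lam k - (((k : ℕ) : ℤ) + 1)) := by
  let x : Fin m → ZMod p := fun t => ((lam t - (((t : ℕ) : ℤ) + 1) : ℤ) : ZMod p)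
  have hx : update x i (x i - 1) = update x k (x k - 1) ∘ σ := by
    funext t
    have ht := (ZMod.intCast_eq_intCast_iff _ _ _).2 (hσ t)
    simp only [update_apply, comp_apply, x]
    split_ifs at ht ⊢ <;> subst_vars <;> push_cast at ht ⊢ <;> linear_combination ht
  rw [← ZMod.intCast_eq_intCast_iff]
  rcases eq_or_eq_zero_of_update_sub_eq_comp_perm x 1 σ hx with hik | hone
  · exact hik
  · have : Subsingleton (ZMod p) := subsingleton_of_zero_eq_one hone.symm
    exact Subsingleton.elim _ _

/-- GL(m) part of Lemma 5.4.  Let `p > 2` be a prime, `m ≥ 1`,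
`λ : {1,…,m} → ℤ` (positions encoded by `Fin m`, position of `t : Fin m` being `t + 1`),
and `i, k` indices.  Let `μ = λ − δ_i` and `ν = λ − δ_k`.  If there is a permutation `σ`
of the positions with `μ_t − t ≡ ν_{σ(t)} − σ(t) (mod p)` for all `t`, then
`λ_i − i ≡ λ_k − k (mod p)`. -/
theorem stmt7 {p : ℕ} (hp : p.Prime) (hp2 : 2 < p) {m : ℕ} (hm : 1 ≤ m)
    (lam : Fin m → ℤ) (i k : Fin m) (σ : Equiv.Perm (Fin m))
    (hσ : ∀ t : Fin m,
      Int.ModEq (p : ℤ)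
        ((if t = i then lam t - 1 else lam t) - (((t : ℕ) : ℤ) + 1))
        ((if σ t = k then lam (σ t) - 1 else lam (σ t)) - (((σ t : ℕ) : ℤ) + 1))) :
    Int.ModEq (p : ℤ) (lam i - (((i : ℕ) : ℤ) + 1)) (lam k - (((k : ℕ) : ℤ) + 1)) :=
  stmt7_general lam i k σ hσ
end

section
/- Let p be a prime with p > 2, n ≥ 1, λ : {1,…,n} → ℤ a function, and j, l ∈ {1,…,n}. Let μ = λ + δ_j and ν = λ + δ_l, i.e., μ_t = λ_t + 1 if t = j and μ_t = λ_t otherwise, and similarly for ν with l in place of j. Suppose there exists a permutation σ of {1,…,n} such that μ_t − t ≡ ν_{σ(t)} − σ(t) (mod p) for every t ∈ {1,…,n}. Then λ_j − j ≡ λ_l − l (mod p). -/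
/-!
Reduce mod `p` and put `g t = λ_t - t`. The permutation matches the values of `g + δ_j`
with those of `g + δ_l`, counted with multiplicity. If `g l ≠ g j`, the value `g j` is
taken one time fewer by `g + δ_j` than by `g` (position `j` moves away to `g j + 1`), but at
least as often by `g + δ_l` as by `g` (position `l` did not take it), a contradiction.
-/

open Finset

section

variable {ι A : Type*} [Fintype ι] [DecidableEq ι] [DecidableEq A] [AddMonoid A]

lemma card_filter_add_single_eq_apply_self [IsLeftCancelAdd A] (g : ι → A) {a : A}
    (ha : a ≠ 0) (j : ι) :
    #{t | (g + Pi.single j a : ι → A) t = g j} = #(({t | g t = g j} : Finset ι).erase j) := by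
  congr 1
  ext t
  by_cases htj : t = j
  · subst htj
    simpa using ha
  · simp [htj]

lemma card_filter_le_card_filter_add_single (g : ι → A) (a : A) {l : ι} {c : A}
    (hl : g l ≠ c) : #{t | g t = c} ≤ #{t | (g + Pi.single l a : ι → A) t = c} := by
  refine card_le_card fun t ht => ?_
  have htl : t ≠ l := by
    rintro rfl
    exact hl (mem_filter.mp ht).2
  simpa [htl] using ht

theorem eq_of_add_single_eq_comp_perm [IsLeftCancelAdd A] (g : ι → A) {a : A} (ha : a ≠ 0)
    {j l : ι} (σ : Equiv.Perm ι)
    (h : g + Pi.single j a = (g + Pi.single l a : ι → A) ∘ σ) :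
    g j = g l := by
  by_contra hjl
  have hperm : #{t | (g + Pi.single j a : ι → A) t = g j} =
      #{s | (g + Pi.single l a : ι → A) s = g j} :=
    card_equiv σ fun t => by simp only [mem_filter, mem_univ, h, Function.comp_apply]
  have hlt : #(({t | g t = g j} : Finset ι).erase j) < #{t | g t = g j} :=
    card_erase_lt_of_mem (by simp)
  have hle := card_filter_le_card_filter_add_single g a (Ne.symm hjl)
  rw [card_filter_add_single_eq_apply_self g ha] at hperm
  omega

end

theorem stmt8_general {p : ℕ} {n : ℕ}
    (lam : Fin n → ℤ) (j l : Fin n) (σ : Equiv.Perm (Fin n))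
    (hσ : ∀ t : Fin n,
      Int.ModEq (p : ℤ)
        ((if t = j then lam t + 1 else lam t) - (((t : ℕ) : ℤ) + 1))
        ((if σ t = l then lam (σ t) + 1 else lam (σ t)) - (((σ t : ℕ) : ℤ) + 1))) :
    Int.ModEq (p : ℤ) (lam j - (((j : ℕ) : ℤ) + 1)) (lam l - (((l : ℕ) : ℤ) + 1)) := by
  let g : Fin n → ZMod p := fun t => ((lam t - (((t : ℕ) : ℤ) + 1) : ℤ) : ZMod p)
  suffices g j = g l from (ZMod.intCast_eq_intCast_iff _ _ _).mp this
  rcases subsingleton_or_nontrivial (ZMod p) with _ | _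
  · exact Subsingleton.elim _ _
  refine eq_of_add_single_eq_comp_perm g one_ne_zero σ (funext fun t => ?_)
  have ht := (ZMod.intCast_eq_intCast_iff _ _ _).mpr (hσ t)
  simp only [g, Pi.add_apply, Function.comp_apply, Pi.single_apply]
  split_ifs at ht ⊢ <;> push_cast at ht ⊢ <;> linear_combination ht

/-- GL(n) part of Lemma 5.4.  Let `p > 2` be a prime, `n ≥ 1`,
`λ : {1,…,n} → ℤ` (positions encoded by `Fin n`, position of `t : Fin n` being `t + 1`),
and `j, l` indices.  Let `μ = λ + δ_j` and `ν = λ + δ_l`.  If there is a permutation `σ`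
of the positions with `μ_t − t ≡ ν_{σ(t)} − σ(t) (mod p)` for all `t`, then
`λ_j − j ≡ λ_l − l (mod p)`. -/
theorem stmt8 {p : ℕ} (hp : p.Prime) (hp2 : 2 < p) {n : ℕ} (hn : 1 ≤ n)
    (lam : Fin n → ℤ) (j l : Fin n) (σ : Equiv.Perm (Fin n))
    (hσ : ∀ t : Fin n,
      Int.ModEq (p : ℤ)
        ((if t = j then lam t + 1 else lam t) - (((t : ℕ) : ℤ) + 1))
        ((if σ t = l then lam (σ t) + 1 else lam (σ t)) - (((σ t : ℕ) : ℤ) + 1))) :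
    Int.ModEq (p : ℤ) (lam j - (((j : ℕ) : ℤ) + 1)) (lam l - (((l : ℕ) : ℤ) + 1)) :=
  stmt8_general lam j l σ hσ
end

section
/- Let p be a prime with p > 2, m, n ≥ 1, λ⁺ : {1,…,m} → ℤ and λ⁻ : {1,…,n} → ℤ functions, i, k ∈ {1,…,m}, and j, l ∈ {1,…,n}. Define ω_{ij} = λ⁺_i + λ⁻_j + m + 1 − i − j and ω_{kl} = λ⁺_k + λ⁻_l + m + 1 − k − l. Suppose there exists a permutation σ⁺ of {1,…,m} such that (λ⁺ − δ_i)_t − t ≡ (λ⁺ − δ_k)_{σ⁺(t)} − σ⁺(t) (mod p) for every t ∈ {1,…,m}, and there exists a permutation σ⁻ of {1,…,n} such that (λ⁻ + δ_j)_t − t ≡ (λ⁻ + δ_l)_{σ⁻(t)} − σ⁻(t) (mod p) for every t ∈ {1,…,n}. Then ω_{ij} ≡ 0 (mod p) if and only if ω_{kl} ≡ 0 (mod p). -/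
/-!
Reduce mod `p` and put `x_t = λ⁺_t - t`. The first hypothesis says that lowering `x` by one at
`i` or at `k` gives the same multiset of residues. Cancelling the entries away from `i` and `k`
leaves `{x_i - 1, x_k} = {x_i, x_k - 1}`, and since `1 ≠ 0` this forces `x_i = x_k`. Likewise
`λ⁻_j - j ≡ λ⁻_l - l`, and `ω_{ij} - ω_{kl}` is the sum of these two differences.
-/

open Finset

theorem map_univ_val_eq_of_perm {ι α : Type*} [Fintype ι] {f g : ι → α} (σ : Equiv.Perm ι)
    (h : ∀ t, f t = g (σ t)) : univ.val.map f = univ.val.map g := by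
  rw [show f = g ∘ σ from funext h, ← Multiset.map_map, Multiset.map_univ_val_equiv]

section
variable {ι : Type*} [Fintype ι] [DecidableEq ι]

theorem map_univ_val_eq_pair_add {α : Type*} {i k : ι} (hik : i ≠ k) (f : ι → α) :
    univ.val.map f = {f i, f k} + ((univ.erase i).erase k).val.map f := by
  have hk : k ∈ univ.val.erase i := (Multiset.mem_erase_of_ne hik.symm).2 (mem_univ k)
  conv_lhs => rw [← Multiset.cons_erase (mem_univ_val i), ← Multiset.cons_erase hk]
  simp

theorem eq_of_map_univ_val_add_single_eq {M : Type*} [AddCancelCommMonoid M] {a : ι → M}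
    {i k : ι} {c : M} (hc : c ≠ 0)
    (h : univ.val.map (a + Pi.single i c) = univ.val.map (a + Pi.single k c)) : a i = a k := by
  rcases eq_or_ne i k with rfl | hik
  · rfl
  have hrest : ∀ t ∈ ((univ.erase i).erase k).val,
      (a + Pi.single i c : ι → M) t = (a + Pi.single k c : ι → M) t := by
    intro t ht
    simp only [mem_val, mem_erase] at ht
    simp [ht.1, ht.2.1]
  rw [map_univ_val_eq_pair_add hik, map_univ_val_eq_pair_add hik,
    Multiset.map_congr rfl hrest, add_left_inj] at h
  have hpair : ({a i + c, a k} : Multiset M) = {a i, a k + c} := by simpa [hik, hik.symm] using h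
  have hmem : a i + c ∈ ({a i, a k + c} : Multiset M) := hpair ▸ Multiset.mem_cons_self _ _
  simpa [hc] using hmem

theorem eq_of_add_single_eq_comp_perm_s9 {M : Type*} [AddCancelCommMonoid M] {a : ι → M}
    {i k : ι} {c : M} (hc : c ≠ 0) (σ : Equiv.Perm ι)
    (h : ∀ t, a t + (Pi.single i c : ι → M) t = a (σ t) + (Pi.single k c : ι → M) (σ t)) :
    a i = a k :=
  eq_of_map_univ_val_add_single_eq hc (map_univ_val_eq_of_perm σ h)

end

theorem stmt9_general {p : ℕ} {m n : ℕ}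
    (lamp : Fin m → ℤ) (lamm : Fin n → ℤ) (i k : Fin m) (j l : Fin n)
    (σp : Equiv.Perm (Fin m))
    (hσp : ∀ t : Fin m,
      Int.ModEq (p : ℤ)
        ((if t = i then lamp t - 1 else lamp t) - (((t : ℕ) : ℤ) + 1))
        ((if σp t = k then lamp (σp t) - 1 else lamp (σp t)) - (((σp t : ℕ) : ℤ) + 1)))
    (σm : Equiv.Perm (Fin n))
    (hσm : ∀ t : Fin n,
      Int.ModEq (p : ℤ)
        ((if t = j then lamm t + 1 else lamm t) - (((t : ℕ) : ℤ) + 1))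
        ((if σm t = l then lamm (σm t) + 1 else lamm (σm t)) - (((σm t : ℕ) : ℤ) + 1))) :
    Int.ModEq (p : ℤ)
        (lamp i + lamm j + (m : ℤ) + 1 - (((i : ℕ) : ℤ) + 1) - (((j : ℕ) : ℤ) + 1)) 0 ↔
      Int.ModEq (p : ℤ)
        (lamp k + lamm l + (m : ℤ) + 1 - (((k : ℕ) : ℤ) + 1) - (((l : ℕ) : ℤ) + 1)) 0 := by
  simp only [← ZMod.intCast_eq_intCast_iff] at hσp hσm ⊢
  push_cast at hσp hσm ⊢
  rcases subsingleton_or_nontrivial (ZMod p) with _ | _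
  · exact iff_of_true (Subsingleton.elim _ _) (Subsingleton.elim _ _)
  have hplus : (lamp i : ZMod p) - ((i : ℕ) + 1) = lamp k - ((k : ℕ) + 1) :=
    eq_of_add_single_eq_comp_perm_s9 (a := fun t => (lamp t : ZMod p) - ((t : ℕ) + 1))
      (neg_ne_zero.2 one_ne_zero) σp fun t => by
        have h := hσp t
        simp only [Pi.single_apply]
        split_ifs at h ⊢ <;> linear_combination h
  have hminus : (lamm j : ZMod p) - ((j : ℕ) + 1) = lamm l - ((l : ℕ) + 1) :=
    eq_of_add_single_eq_comp_perm_s9 (a := fun t => (lamm t : ZMod p) - ((t : ℕ) + 1))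
      one_ne_zero σm fun t => by
        have h := hσm t
        simp only [Pi.single_apply]
        split_ifs at h ⊢ <;> linear_combination h
  constructor <;> intro h
  · linear_combination h - hplus - hminus
  · linear_combination h + hplus + hminus

/-- final assertion of Lemma 5.4.  Let `p > 2` be a prime, `m, n ≥ 1`,
`λ⁺ : {1,…,m} → ℤ`, `λ⁻ : {1,…,n} → ℤ` (positions encoded by `Fin m`, `Fin n`, the
position of `t` being `t + 1`), `i, k ∈ {1,…,m}`, `j, l ∈ {1,…,n}`, and set
`ω_{ij} = λ⁺_i + λ⁻_j + m + 1 − i − j`, `ω_{kl} = λ⁺_k + λ⁻_l + m + 1 − k − l`.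
If there are permutations `σ⁺` of `{1,…,m}` and `σ⁻` of `{1,…,n}` with
`(λ⁺ − δ_i)_t − t ≡ (λ⁺ − δ_k)_{σ⁺(t)} − σ⁺(t) (mod p)` for all `t`, and
`(λ⁻ + δ_j)_t − t ≡ (λ⁻ + δ_l)_{σ⁻(t)} − σ⁻(t) (mod p)` for all `t`, then
`ω_{ij} ≡ 0 (mod p)` if and only if `ω_{kl} ≡ 0 (mod p)`. -/
theorem stmt9 {p : ℕ} (hp : p.Prime) (hp2 : 2 < p) {m n : ℕ} (hm : 1 ≤ m) (hn : 1 ≤ n)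
    (lamp : Fin m → ℤ) (lamm : Fin n → ℤ) (i k : Fin m) (j l : Fin n)
    (σp : Equiv.Perm (Fin m))
    (hσp : ∀ t : Fin m,
      Int.ModEq (p : ℤ)
        ((if t = i then lamp t - 1 else lamp t) - (((t : ℕ) : ℤ) + 1))
        ((if σp t = k then lamp (σp t) - 1 else lamp (σp t)) - (((σp t : ℕ) : ℤ) + 1)))
    (σm : Equiv.Perm (Fin n))
    (hσm : ∀ t : Fin n,
      Int.ModEq (p : ℤ)
        ((if t = j then lamm t + 1 else lamm t) - (((t : ℕ) : ℤ) + 1))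
        ((if σm t = l then lamm (σm t) + 1 else lamm (σm t)) - (((σm t : ℕ) : ℤ) + 1))) :
    Int.ModEq (p : ℤ)
        (lamp i + lamm j + (m : ℤ) + 1 - (((i : ℕ) : ℤ) + 1) - (((j : ℕ) : ℤ) + 1)) 0 ↔
      Int.ModEq (p : ℤ)
        (lamp k + lamm l + (m : ℤ) + 1 - (((k : ℕ) : ℤ) + 1) - (((l : ℕ) : ℤ) + 1)) 0 :=
  stmt9_general lamp lamm i k j l σp hσp σm hσm
end
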